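/- Convergence of the PGD algorithm for coercive symmetric problems (Proposition 1, discretized setting): let a : H × H → ℝ be a symmetric bilinear form that is coercive (there is α > 0 with a(g,g) ≥ α ‖g‖_F² for all g ∈ H), and let ℓ : H → ℝ be a linear form. Let f ∈ H be the unique element with a(f,g) = ℓ(g) for all g ∈ H. Define a PGD sequence by f₀ = g₀ ∈ H and f_{n+1} = f_n + r_{n+1}⊗s_{n+1}, where (r_{n+1}, s_{n+1}) minimizes (u,v) ↦ ½ a(f_n + u⊗v, f_n + u⊗v) − ℓ(f_n + u⊗v) over all u ∈ ℝ^p, v ∈ ℝ^q. Then each iteration is well-defined (a minimizer exists), and f_n converges to f in the Frobenius norm. -/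

import Mathlib

open Matrix Filter Topology

noncomputable section

/-- The Frobenius inner product `⟨A,B⟩_F = trace(Aᵀ B)` on real `p × q` matrices. -/
def frobInner {p q : ℕ} (A B : Matrix (Fin p) (Fin q) ℝ) : ℝ := (Aᵀ * B).trace

/-- The Frobenius norm. -/
def frobNorm {p q : ℕ} (A : Matrix (Fin p) (Fin q) ℝ) : ℝ := Real.sqrt (frobInner A A)

/-- The rank-one matrix `r ⊗ s` with entries `(r ⊗ s)_{ij} = r i * s j`. -/
def tensor {p q : ℕ} (r : EuclideanSpace ℝ (Fin p)) (s : EuclideanSpace ℝ (Fin q)) :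
    Matrix (Fin p) (Fin q) ℝ := Matrix.of fun i j => r i * s j

/-!
Up to the constant `a(f,f)`, twice the energy `½ a(x,x) - ℓ(x)` is `E(x) = a(x - f, x - f)`, so a
PGD step minimizes `E` over `fₙ + {u ⊗ v}`. A minimizer exists because `E` is coercive and the pure
tensors form a closed set, cut out by the vanishing of all `2 × 2` minors. Along the iteration
`E(fₙ)` decreases to a limit; comparing a step with the line search `fₙ + t • y` along a pure
tensor `y`, the discriminant of the quadratic `t ↦ E(fₙ + t • y) - E(fₙ₊₁) ≥ 0` gives
`a(fₙ - f, y)² ≤ a(y,y) (E(fₙ) - E(fₙ₊₁)) → 0`. Pure tensors span all matrices, so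
`a(fₙ - f, ·) → 0`, and a nondegenerate form on a finite-dimensional space detects convergence:
`fₙ → f`.
-/

section BilinearForms

variable {M : Type*} [AddCommGroup M] [Module ℝ M]

theorem half_apply_self_sub_le_iff (a : M →ₗ[ℝ] M →ₗ[ℝ] ℝ) (hsymm : ∀ x y, a x y = a y x)
    (ℓ : M →ₗ[ℝ] ℝ) {f : M} (hf : ∀ g, a f g = ℓ g) (x y : M) :
    1 / 2 * a x x - ℓ x ≤ 1 / 2 * a y y - ℓ y ↔ a (x - f) (x - f) ≤ a (y - f) (y - f) := by
  have key : ∀ z, a (z - f) (z - f) = 2 * (1 / 2 * a z z - ℓ z) + a f f := by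
    intro z
    simp only [map_sub, LinearMap.sub_apply]
    rw [hsymm z f, hf z]
    ring
  rw [key, key]
  constructor <;> intro h <;> linarith

theorem sq_apply_le_of_forall_le_apply_add_smul (a : M →ₗ[ℝ] M →ₗ[ℝ] ℝ)
    (hsymm : ∀ x y, a x y = a y x) {x y : M} {c : ℝ}
    (h : ∀ t : ℝ, c ≤ a (x + t • y) (x + t • y)) :
    a x y ^ 2 ≤ a y y * (a x x - c) := by
  have hquad : ∀ t : ℝ, 0 ≤ a y y * (t * t) + 2 * a x y * t + (a x x - c) := by
    intro t
    have ht := h t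
    simp only [map_add, map_smul, LinearMap.add_apply, LinearMap.smul_apply, smul_eq_mul,
      hsymm y x] at ht
    linarith
  have hdisc := discrim_le_zero hquad
  rw [discrim] at hdisc
  linarith

theorem tendsto_apply_of_span_eq_top {ι : Type*} {l : Filter ι} (a : M →ₗ[ℝ] M →ₗ[ℝ] ℝ)
    {S : Set M} (hS : Submodule.span ℝ S = ⊤) {G : ι → M}
    (h : ∀ y ∈ S, Tendsto (fun n => a (G n) y) l (𝓝 0)) (y : M) :
    Tendsto (fun n => a (G n) y) l (𝓝 0) := by
  induction (hS ▸ Submodule.mem_top : y ∈ Submodule.span ℝ S) using Submodule.span_induction with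
  | mem y hy => exact h y hy
  | zero => simpa using tendsto_const_nhds
  | add y z _ _ hy hz => simpa using hy.add hz
  | smul c y _ hy => simpa using hy.const_mul c

theorem tendsto_zero_of_forall_tendsto_apply [TopologicalSpace M] [IsTopologicalAddGroup M]
    [ContinuousSMul ℝ M] [FiniteDimensional ℝ M] {ι : Type*} {l : Filter ι}
    (a : M →ₗ[ℝ] M →ₗ[ℝ] ℝ) (ha : LinearMap.ker a = ⊥) {G : ι → M}
    (h : ∀ y, Tendsto (fun n => a (G n) y) l (𝓝 0)) : Tendsto G l (𝓝 0) := by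
  let b := Module.finBasis ℝ M
  let L : M →ₗ[ℝ] (Fin (Module.finrank ℝ M) → ℝ) := LinearMap.pi fun i => a.flip (b i)
  have hL : LinearMap.ker L = ⊥ := by
    rw [eq_bot_iff, ← ha]
    intro x hx
    exact b.ext fun i => congr_fun hx i
  obtain ⟨g, hg⟩ := L.exists_leftInverse_of_injective hL
  have hLG : Tendsto (fun n => L (G n)) l (𝓝 0) := tendsto_pi_nhds.2 fun i => h (b i)
  have hgL : ∀ x, g (L x) = x := LinearMap.congr_fun hg
  simpa [Function.comp_def, hgL] using (g.continuous_of_finiteDimensional.tendsto 0).comp hLG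

theorem tendsto_zero_of_greedy [TopologicalSpace M] [IsTopologicalAddGroup M]
    [ContinuousSMul ℝ M] [FiniteDimensional ℝ M] (a : M →ₗ[ℝ] M →ₗ[ℝ] ℝ)
    (hsymm : ∀ x y, a x y = a y x) (hpos : ∀ x, x ≠ 0 → 0 < a x x) {S : Set M}
    (hspan : Submodule.span ℝ S = ⊤) (hS0 : (0 : M) ∈ S) (hsmul : ∀ t : ℝ, ∀ y ∈ S, t • y ∈ S)
    {G : ℕ → M} (hG : ∀ n, ∀ y ∈ S, a (G (n + 1)) (G (n + 1)) ≤ a (G n + y) (G n + y)) :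
    Tendsto G atTop (𝓝 0) := by
  set E : ℕ → ℝ := fun n => a (G n) (G n)
  have hE_nonneg : ∀ n, 0 ≤ E n := fun n => by
    by_cases h : G n = 0
    · simp [E, h]
    · exact (hpos _ h).le
  have hE_anti : Antitone E := antitone_nat_of_succ_le fun n => by simpa using hG n 0 hS0
  have hE_lim := tendsto_atTop_ciInf hE_anti ⟨0, by rintro _ ⟨n, rfl⟩; exact hE_nonneg n⟩
  have hdecr : Tendsto (fun n => E n - E (n + 1)) atTop (𝓝 0) := by
    simpa using hE_lim.sub (hE_lim.comp (tendsto_add_atTop_nat 1))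
  have hS : ∀ y ∈ S, Tendsto (fun n => a (G n) y) atTop (𝓝 0) := by
    intro y hy
    have hsq : Tendsto (fun n => a (G n) y ^ 2) atTop (𝓝 0) :=
      squeeze_zero (fun n => sq_nonneg _)
        (fun n => sq_apply_le_of_forall_le_apply_add_smul a hsymm fun t => hG n _ (hsmul t y hy))
        (by simpa using hdecr.const_mul (a y y))
    have habs := hsq.sqrt
    simp only [Real.sqrt_sq_eq_abs, Real.sqrt_zero] at habs
    exact (tendsto_zero_iff_abs_tendsto_zero _).2 habs
  refine tendsto_zero_of_forall_tendsto_apply a ?_ (tendsto_apply_of_span_eq_top a hspan hS)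
  rw [eq_bot_iff]
  intro x hx
  by_contra hne
  simpa [LinearMap.mem_ker.1 hx] using hpos x hne

end BilinearForms

section CoerciveForms

variable {M : Type*} [NormedAddCommGroup M] [NormedSpace ℝ M] [FiniteDimensional ℝ M]

theorem continuous_apply_self (a : M →ₗ[ℝ] M →ₗ[ℝ] ℝ) : Continuous fun x => a x x :=
  a.toContinuousBilinearMap.continuous₂.comp (continuous_id.prodMk continuous_id)

theorem tendsto_apply_add_self_cocompact (a : M →ₗ[ℝ] M →ₗ[ℝ] ℝ) {α : ℝ} (hα : 0 < α)
    (hcoer : ∀ x, α * ‖x‖ ^ 2 ≤ a x x) (W : M) :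
    Tendsto (fun x => a (W + x) (W + x)) (cocompact M) atTop := by
  have hnorm : Tendsto (fun x => ‖W + x‖) (cocompact M) atTop :=
    (tendsto_norm_cocompact_atTop (E := M)).comp
      (Homeomorph.addLeft W).isClosedEmbedding.tendsto_cocompact
  exact tendsto_atTop_mono (fun x => hcoer (W + x))
    (((tendsto_pow_atTop two_ne_zero).comp hnorm).const_mul_atTop hα)

end CoerciveForms

section PureTensors

variable {p q : ℕ}

theorem tensor_smul_left (c : ℝ) (u : EuclideanSpace ℝ (Fin p)) (v : EuclideanSpace ℝ (Fin q)) :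
    tensor (c • u) v = c • tensor u v := by
  ext i j
  simp [tensor, mul_assoc]

theorem tensor_zero_left (v : EuclideanSpace ℝ (Fin q)) :
    tensor (0 : EuclideanSpace ℝ (Fin p)) v = 0 := by
  ext i j
  simp [tensor]

theorem tensor_single_single (i : Fin p) (j : Fin q) :
    tensor (EuclideanSpace.single i 1) (EuclideanSpace.single j 1) = Matrix.single i j 1 := by
  ext k l
  simp only [tensor, of_apply, PiLp.single_apply, Matrix.single_apply]
  split_ifs <;> simp_all

variable (p q) in
def pureTensors : Set (Matrix (Fin p) (Fin q) ℝ) :=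
  Set.range fun z : EuclideanSpace ℝ (Fin p) × EuclideanSpace ℝ (Fin q) => tensor z.1 z.2

theorem tensor_mem_pureTensors (u : EuclideanSpace ℝ (Fin p)) (v : EuclideanSpace ℝ (Fin q)) :
    tensor u v ∈ pureTensors p q :=
  ⟨(u, v), rfl⟩

theorem zero_mem_pureTensors : (0 : Matrix (Fin p) (Fin q) ℝ) ∈ pureTensors p q :=
  tensor_zero_left (0 : EuclideanSpace ℝ (Fin q)) ▸ tensor_mem_pureTensors 0 0

theorem smul_mem_pureTensors (c : ℝ) {A : Matrix (Fin p) (Fin q) ℝ} (hA : A ∈ pureTensors p q) :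
    c • A ∈ pureTensors p q := by
  obtain ⟨⟨u, v⟩, rfl⟩ := hA
  exact tensor_smul_left c u v ▸ tensor_mem_pureTensors (c • u) v

theorem span_pureTensors : Submodule.span ℝ (pureTensors p q) = ⊤ := by
  refine eq_top_iff.2 ((Matrix.stdBasis ℝ (Fin p) (Fin q)).span_eq ▸ Submodule.span_mono ?_)
  rintro _ ⟨⟨i, j⟩, rfl⟩
  rw [Matrix.stdBasis_eq_single, ← tensor_single_single]
  exact tensor_mem_pureTensors _ _

theorem pureTensors_eq_setOf_minors :
    pureTensors p q = {A | ∀ i j k l, A i j * A k l = A i l * A k j} := by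
  ext A
  constructor
  · rintro ⟨⟨u, v⟩, rfl⟩ i j k l
    simp only [tensor, of_apply]
    ring
  · intro hA
    by_cases h0 : A = 0
    · exact h0 ▸ zero_mem_pureTensors
    obtain ⟨i₀, j₀, hA₀⟩ : ∃ i j, A i j ≠ 0 := by
      by_contra! h
      exact h0 (Matrix.ext h)
    refine ⟨(WithLp.toLp 2 fun i => A i j₀, WithLp.toLp 2 fun j => A i₀ j / A i₀ j₀), ?_⟩
    ext i j
    simp only [tensor, of_apply]
    field_simp
    linarith [hA i j i₀ j₀]

theorem isClosed_pureTensors : IsClosed (pureTensors p q) := by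
  simp only [pureTensors_eq_setOf_minors, Set.ofPred_forall]
  refine isClosed_iInter fun i => isClosed_iInter fun j => isClosed_iInter fun k =>
    isClosed_iInter fun l => isClosed_eq ?_ ?_ <;> fun_prop

end PureTensors

section Frobenius

open scoped Norms.Frobenius

variable {p q : ℕ}

theorem frobNorm_eq_norm (A : Matrix (Fin p) (Fin q) ℝ) : frobNorm A = ‖A‖ := by
  rw [frobNorm, frobInner, Matrix.frobenius_norm_def, ← Real.sqrt_eq_rpow]
  congr 1
  simp only [trace, diag_apply, Matrix.mul_apply, transpose_apply, Real.norm_eq_abs,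
    Real.rpow_ofNat, sq, abs_mul_abs_self]
  exact Finset.sum_comm

theorem frobNorm_pos {A : Matrix (Fin p) (Fin q) ℝ} (hA : A ≠ 0) : 0 < frobNorm A :=
  frobNorm_eq_norm A ▸ norm_pos_iff.2 hA

theorem continuous_frobNorm : Continuous (frobNorm : Matrix (Fin p) (Fin q) ℝ → ℝ) := by
  rw [show (frobNorm : Matrix (Fin p) (Fin q) ℝ → ℝ) = norm from funext frobNorm_eq_norm]
  exact continuous_norm

theorem exists_forall_apply_add_tensor_le
    (a : Matrix (Fin p) (Fin q) ℝ →ₗ[ℝ] Matrix (Fin p) (Fin q) ℝ →ₗ[ℝ] ℝ) {α : ℝ} (hα : 0 < α)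
    (hcoer : ∀ g, α * frobNorm g ^ 2 ≤ a g g) (W : Matrix (Fin p) (Fin q) ℝ) :
    ∃ (u : EuclideanSpace ℝ (Fin p)) (v : EuclideanSpace ℝ (Fin q)), ∀ u' v',
      a (W + tensor u v) (W + tensor u v) ≤ a (W + tensor u' v') (W + tensor u' v') := by
  have hcoer' : ∀ g, α * ‖g‖ ^ 2 ≤ a g g := by simpa only [frobNorm_eq_norm] using hcoer
  obtain ⟨_, ⟨⟨u, v⟩, rfl⟩, hmin⟩ :=
    ((continuous_apply_self a).comp (continuous_const_add W)).continuousOn.exists_isMinOn'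
      isClosed_pureTensors zero_mem_pureTensors
      (((tendsto_apply_add_self_cocompact a hα hcoer' W).eventually_ge_atTop _).filter_mono
        inf_le_left)
  exact ⟨u, v, fun u' v' => hmin (tensor_mem_pureTensors u' v')⟩

end Frobenius

theorem stmt_14_general {p q : ℕ}
    (a : Matrix (Fin p) (Fin q) ℝ →ₗ[ℝ] Matrix (Fin p) (Fin q) ℝ →ₗ[ℝ] ℝ)
    (hsymm : ∀ g h : Matrix (Fin p) (Fin q) ℝ, a g h = a h g)
    (α : ℝ) (hα : 0 < α)
    (hcoer : ∀ g : Matrix (Fin p) (Fin q) ℝ, α * frobNorm g ^ 2 ≤ a g g)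
    (ℓ : Matrix (Fin p) (Fin q) ℝ →ₗ[ℝ] ℝ)
    (f : Matrix (Fin p) (Fin q) ℝ)
    (hf : ∀ g : Matrix (Fin p) (Fin q) ℝ, a f g = ℓ g)
    (fseq : ℕ → Matrix (Fin p) (Fin q) ℝ)
    (r : ℕ → EuclideanSpace ℝ (Fin p)) (s : ℕ → EuclideanSpace ℝ (Fin q))
    (hstep : ∀ n, fseq (n + 1) = fseq n + tensor (r n) (s n))
    (hmin : ∀ (n : ℕ) (u : EuclideanSpace ℝ (Fin p)) (v : EuclideanSpace ℝ (Fin q)),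
      (1 / 2) * a (fseq n + tensor (r n) (s n)) (fseq n + tensor (r n) (s n))
          - ℓ (fseq n + tensor (r n) (s n))
        ≤ (1 / 2) * a (fseq n + tensor u v) (fseq n + tensor u v)
          - ℓ (fseq n + tensor u v)) :
    (∀ w : Matrix (Fin p) (Fin q) ℝ,
      ∃ (rm : EuclideanSpace ℝ (Fin p)) (sm : EuclideanSpace ℝ (Fin q)),
        ∀ (u : EuclideanSpace ℝ (Fin p)) (v : EuclideanSpace ℝ (Fin q)),
          (1 / 2) * a (w + tensor rm sm) (w + tensor rm sm) - ℓ (w + tensor rm sm)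
            ≤ (1 / 2) * a (w + tensor u v) (w + tensor u v) - ℓ (w + tensor u v)) ∧
    Tendsto (fun n => frobNorm (fseq n - f)) atTop (𝓝 0) := by
  have hJ := half_apply_self_sub_le_iff a hsymm ℓ hf
  refine ⟨fun w => ?_, ?_⟩
  · obtain ⟨rm, sm, hrs⟩ := exists_forall_apply_add_tensor_le a hα hcoer (w - f)
    refine ⟨rm, sm, fun u v => (hJ _ _).2 ?_⟩
    simpa only [add_sub_right_comm w] using hrs u v
  have hpos : ∀ g, g ≠ 0 → 0 < a g g := fun g hg =>
    (mul_pos hα (pow_pos (frobNorm_pos hg) 2)).trans_le (hcoer g)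
  have hG : Tendsto (fun n => fseq n - f) atTop (𝓝 0) := by
    refine tendsto_zero_of_greedy a hsymm hpos span_pureTensors zero_mem_pureTensors
      smul_mem_pureTensors ?_
    rintro n _ ⟨⟨u, v⟩, rfl⟩
    rw [hstep]
    simpa only [add_sub_right_comm (fseq n)] using (hJ _ _).1 (hmin n u v)
  simpa [Function.comp_def, frobNorm, frobInner] using (continuous_frobNorm.tendsto 0).comp hG

/-- Convergence of the PGD algorithm for coercive symmetric problems (discretized
setting): each PGD iteration is well-defined (a minimizer over pure tensor products
exists) and the PGD iterates converge to the solution `f` of `a(f,·) = ℓ(·)` in the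
Frobenius norm. -/
theorem stmt_14 {p q : ℕ} (hp : 1 ≤ p) (hq : 1 ≤ q)
    (a : Matrix (Fin p) (Fin q) ℝ →ₗ[ℝ] Matrix (Fin p) (Fin q) ℝ →ₗ[ℝ] ℝ)
    (hsymm : ∀ g h : Matrix (Fin p) (Fin q) ℝ, a g h = a h g)
    (α : ℝ) (hα : 0 < α)
    (hcoer : ∀ g : Matrix (Fin p) (Fin q) ℝ, α * frobNorm g ^ 2 ≤ a g g)
    (ℓ : Matrix (Fin p) (Fin q) ℝ →ₗ[ℝ] ℝ)
    (f : Matrix (Fin p) (Fin q) ℝ)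
    (hf : ∀ g : Matrix (Fin p) (Fin q) ℝ, a f g = ℓ g)
    (g₀ : Matrix (Fin p) (Fin q) ℝ)
    (fseq : ℕ → Matrix (Fin p) (Fin q) ℝ)
    (r : ℕ → EuclideanSpace ℝ (Fin p)) (s : ℕ → EuclideanSpace ℝ (Fin q))
    (hf0 : fseq 0 = g₀)
    (hstep : ∀ n, fseq (n + 1) = fseq n + tensor (r n) (s n))
    (hmin : ∀ (n : ℕ) (u : EuclideanSpace ℝ (Fin p)) (v : EuclideanSpace ℝ (Fin q)),
      (1 / 2) * a (fseq n + tensor (r n) (s n)) (fseq n + tensor (r n) (s n))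
          - ℓ (fseq n + tensor (r n) (s n))
        ≤ (1 / 2) * a (fseq n + tensor u v) (fseq n + tensor u v)
          - ℓ (fseq n + tensor u v)) :
    (∀ w : Matrix (Fin p) (Fin q) ℝ,
      ∃ (rm : EuclideanSpace ℝ (Fin p)) (sm : EuclideanSpace ℝ (Fin q)),
        ∀ (u : EuclideanSpace ℝ (Fin p)) (v : EuclideanSpace ℝ (Fin q)),
          (1 / 2) * a (w + tensor rm sm) (w + tensor rm sm) - ℓ (w + tensor rm sm)
            ≤ (1 / 2) * a (w + tensor u v) (w + tensor u v) - ℓ (w + tensor u v)) ∧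
    Tendsto (fun n => frobNorm (fseq n - f)) atTop (𝓝 0) :=
  stmt_14_general a hsymm α hα hcoer ℓ f hf fseq r s hstep hmin

end
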